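/- Fix integers D ≥ 2 and K ≥ 1 and consider the discrete model with labels uniform on Fin K. A choice distribution σ_p (for p a discrete single-edge strategy in vector form) is an extreme point of S = {σ_q : q a discrete single-edge strategy in vector form} if and only if there exists a bijection α : Fin K → Fin K such that σ_p is the law of the ≺_α-maximum of D i.i.d. uniform Fin K samples, where a ≺_α b iff α^{−1}(a) < α^{−1}(b); and in that case σ_p({α(i)}) = ((i+1)^D − i^D)/K^D for every i ∈ {0,1,…,K−1}, so the multiset of values of the probability mass function of σ_p is {1/K^D, (2^D−1)/K^D, (3^D−2^D)/K^D, …, (K^D−(K−1)^D)/K^D}. -/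

import Mathlib

open MeasureTheory Filter
open scoped ENNReal Topology Classical

/-- A discrete single-edge strategy in vector form on labels `Fin K`. -/
def IsDStrategy (D K : ℕ) (p : (Fin D → Fin K) → Fin D → ℝ) : Prop :=
  (∀ v k, 0 ≤ p v k) ∧ (∀ v k, p v k ≤ 1) ∧ (∀ v, ∑ k, p v k = 1)

/-- The probability mass function of the choice distribution of a discrete strategy:
`σ_p({m}) = Σ_v u^D({v}) Σ_k p_k(v)·1_{v_k = m}`. -/
noncomputable def dLaw {D K : ℕ} (p : (Fin D → Fin K) → Fin D → ℝ) (m : Fin K) : ℝ :=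
  (1 / (K : ℝ) ^ D) * ∑ v : Fin D → Fin K, ∑ k, p v k * (if v k = m then 1 else 0)

/-- The set of discrete choice distributions. -/
def dS (D K : ℕ) : Set (Fin K → ℝ) :=
  {f | ∃ p : (Fin D → Fin K) → Fin D → ℝ, IsDStrategy D K p ∧ f = dLaw p}

/-- Extreme points of `dS`. -/
def dExtreme (D K : ℕ) (f : Fin K → ℝ) : Prop :=
  f ∈ dS D K ∧ ∀ f₁ ∈ dS D K, ∀ f₂ ∈ dS D K, ∀ t : ℝ, 0 < t → t < 1 →
    f = (fun m => t * f₁ m + (1 - t) * f₂ m) → f₁ = f₂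

/-- The `≺_α`-maximum of the coordinates of `v`, where `a ≺_α b ↔ α⁻¹ a < α⁻¹ b`. -/
noncomputable def alphaMax {D K : ℕ} (hD : 1 ≤ D) (α : Equiv.Perm (Fin K))
    (v : Fin D → Fin K) : Fin K :=
  α (Finset.univ.sup' ⟨⟨0, hD⟩, Finset.mem_univ _⟩ (fun i => α.symm (v i)))

namespace St18

variable {D K : ℕ}

noncomputable def mass (p : (Fin D → Fin K) → Fin D → ℝ) (v : Fin D → Fin K) (a : Fin K) : ℝ :=
  ∑ k, p v k * (if v k = a then 1 else 0)

lemma dLaw_eq_mass (p : (Fin D → Fin K) → Fin D → ℝ) (m : Fin K) :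
    dLaw p m = (1 / (K : ℝ) ^ D) * ∑ v, mass p v m := rfl

lemma mass_nonneg {p : (Fin D → Fin K) → Fin D → ℝ} (hp : IsDStrategy D K p)
    (v : Fin D → Fin K) (a : Fin K) : 0 ≤ mass p v a := by
  apply Finset.sum_nonneg
  intro k _
  have := hp.1 v k
  split <;> simp_all

lemma sum_mass {p : (Fin D → Fin K) → Fin D → ℝ} (hp : IsDStrategy D K p)
    (v : Fin D → Fin K) : ∑ a, mass p v a = 1 := by
  unfold mass
  rw [Finset.sum_comm]
  have h : ∀ k : Fin D, (∑ a : Fin K, p v k * if v k = a then 1 else 0) = p v k := by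
    intro k; simp
  rw [Finset.sum_congr rfl (fun k _ => h k)]
  exact hp.2.2 v

lemma mass_le_T {p : (Fin D → Fin K) → Fin D → ℝ} (hp : IsDStrategy D K p) : True := trivial

/-- number of `x : Fin K` with value `< j`, for `j ≤ K` -/
lemma count_lt (j : ℕ) (hj : j ≤ K) :
    (Finset.univ.filter fun x : Fin K => (x : ℕ) < j).card = j := by
  rw [← Finset.card_range j]
  apply Finset.card_nbij (i := Fin.val)
  · intro a ha; simpa using (Finset.mem_filter.mp ha).2
  · exact Fin.val_injective.injOn
  · intro n hn
    simp only [Finset.coe_range, Set.mem_Iio] at hn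
    exact ⟨⟨n, lt_of_lt_of_le hn hj⟩, by simp [hn]⟩

/-- number of `v` with all coordinates satisfying `P`. -/
lemma count_pi (P : Fin K → Prop) [DecidablePred P] :
    (Finset.univ.filter fun v : Fin D → Fin K => ∀ k, P (v k)).card
      = (Finset.univ.filter fun x : Fin K => P x).card ^ D := by
  classical
  rw [← Fintype.card_piFinset_const]
  congr 1
  ext v
  simp [Fintype.mem_piFinset]

lemma count_perm (α : Equiv.Perm (Fin K)) (P : Fin K → Prop) [DecidablePred P] :
    (Finset.univ.filter fun x : Fin K => P (α.symm x)).card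
      = (Finset.univ.filter fun x : Fin K => P x).card := by
  classical
  apply Finset.card_nbij' (i := fun x => α.symm x) (j := fun y => α y)
  · intro a ha; simpa using (Finset.mem_filter.mp ha).2
  · intro y hy; simpa using (Finset.mem_filter.mp hy).2
  · intro a _; simp
  · intro y _; simp


section Counting

variable (hD1 : 1 ≤ D) (α : Equiv.Perm (Fin K))

lemma symm_alphaMax (v : Fin D → Fin K) :
    α.symm (alphaMax hD1 α v)
      = Finset.univ.sup' ⟨⟨0, hD1⟩, Finset.mem_univ _⟩ (fun i => α.symm (v i)) := by
  simp [alphaMax]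

lemma alphaMax_mem (v : Fin D → Fin K) : ∃ k, v k = alphaMax hD1 α v := by
  obtain ⟨k, _, hk⟩ := Finset.exists_mem_eq_sup' (⟨⟨0, hD1⟩, Finset.mem_univ _⟩ :
    (Finset.univ : Finset (Fin D)).Nonempty) (fun i => α.symm (v i))
  refine ⟨k, ?_⟩
  simp only [alphaMax, hk]
  simp

lemma le_symm_alphaMax (v : Fin D → Fin K) (k : Fin D) :
    α.symm (v k) ≤ α.symm (alphaMax hD1 α v) := by
  rw [symm_alphaMax hD1 α v]
  exact Finset.le_sup' (fun i => α.symm (v i)) (Finset.mem_univ k)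

lemma tail_iff (j : ℕ) (v : Fin D → Fin K) :
    j ≤ (α.symm (alphaMax hD1 α v) : ℕ) ↔ ∃ k, j ≤ (α.symm (v k) : ℕ) := by
  constructor
  · intro h
    obtain ⟨k, hk⟩ := alphaMax_mem hD1 α v
    exact ⟨k, by rw [hk]; exact h⟩
  · rintro ⟨k, hk⟩
    exact le_trans hk (le_symm_alphaMax hD1 α v k)

lemma count_tail (j : ℕ) (hj : j ≤ K) :
    (Finset.univ.filter fun v : Fin D → Fin K =>
      j ≤ (α.symm (alphaMax hD1 α v) : ℕ)).card = K ^ D - j ^ D := by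
  classical
  have hcompl : (Finset.univ.filter fun v : Fin D → Fin K =>
      ¬ (j ≤ (α.symm (alphaMax hD1 α v) : ℕ))).card = j ^ D := by
    have hiff : ∀ v : Fin D → Fin K,
        (¬ (j ≤ (α.symm (alphaMax hD1 α v) : ℕ))) ↔ ∀ k, ((α.symm (v k) : ℕ) < j) := by
      intro v
      constructor
      · intro h k
        by_contra hk
        exact h ((tail_iff hD1 α j v).mpr ⟨k, by omega⟩)
      · intro h hc
        obtain ⟨k, hk⟩ := (tail_iff hD1 α j v).mp hc
        exact absurd hk (not_le.mpr (h k))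
    rw [Finset.filter_congr (fun v _ => hiff v)]
    rw [count_pi (D := D) (P := fun x => ((α.symm x : ℕ) < j))]
    rw [count_perm α (fun x => ((x : ℕ) < j)), count_lt j hj]
  have htot := Finset.card_filter_add_card_filter_not
    (s := (Finset.univ : Finset (Fin D → Fin K)))
    (p := fun v => j ≤ (α.symm (alphaMax hD1 α v) : ℕ))
  have huniv : (Finset.univ : Finset (Fin D → Fin K)).card = K ^ D := by
    simp [Finset.card_univ, Fintype.card_pi_const]
  omega


lemma count_max (i : Fin K) :
    (Finset.univ.filter fun v : Fin D → Fin K => alphaMax hD1 α v = α i).card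
      = ((i : ℕ) + 1) ^ D - (i : ℕ) ^ D := by
  classical
  have key : ∀ v : Fin D → Fin K, ((i : ℕ) ≤ (α.symm (alphaMax hD1 α v) : ℕ)) ↔
      (alphaMax hD1 α v = α i ∨ (i : ℕ) + 1 ≤ (α.symm (alphaMax hD1 α v) : ℕ)) := by
    intro v
    constructor
    · intro h
      rcases Nat.eq_or_lt_of_le h with h' | h'
      · left
        rw [← Equiv.symm_apply_eq]
        exact Fin.ext h'.symm
      · right; omega
    · rintro (h | h)
      · rw [h]; simp
      · omega
  have hun : (Finset.univ.filter fun v : Fin D → Fin K =>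
        (i : ℕ) ≤ (α.symm (alphaMax hD1 α v) : ℕ))
      = (Finset.univ.filter fun v : Fin D → Fin K => alphaMax hD1 α v = α i)
        ∪ (Finset.univ.filter fun v : Fin D → Fin K =>
            (i : ℕ) + 1 ≤ (α.symm (alphaMax hD1 α v) : ℕ)) := by
    ext v
    simp only [Finset.mem_filter, Finset.mem_univ, true_and, Finset.mem_union]
    exact key v
  have hdisj : Disjoint (Finset.univ.filter fun v : Fin D → Fin K => alphaMax hD1 α v = α i)
      (Finset.univ.filter fun v : Fin D → Fin K =>
        (i : ℕ) + 1 ≤ (α.symm (alphaMax hD1 α v) : ℕ)) := by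
    rw [Finset.disjoint_left]
    intro v hv hv'
    simp only [Finset.mem_filter, Finset.mem_univ, true_and] at hv hv'
    rw [hv] at hv'
    simp at hv'
  have h1 := count_tail hD1 α (i : ℕ) (le_of_lt i.2)
  have h2 := count_tail hD1 α ((i : ℕ) + 1) i.2
  rw [hun, Finset.card_union_of_disjoint hdisj] at h1
  have hm1 : (i : ℕ) ^ D ≤ ((i : ℕ) + 1) ^ D := Nat.pow_le_pow_left (by omega) D
  have hm2 : ((i : ℕ) + 1) ^ D ≤ K ^ D := Nat.pow_le_pow_left i.2 D
  omega

lemma sum_card_max (j : ℕ) (hj : j ≤ K) :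
    ∑ m ∈ Finset.univ.filter (fun m : Fin K => j ≤ (α.symm m : ℕ)),
      (Finset.univ.filter fun v : Fin D → Fin K => alphaMax hD1 α v = m).card
    = K ^ D - j ^ D := by
  classical
  rw [← count_tail hD1 α j hj]
  rw [Finset.card_eq_sum_card_fiberwise (f := alphaMax hD1 α)
    (t := Finset.univ.filter (fun m : Fin K => j ≤ (α.symm m : ℕ)))
    (fun v hv => by
      simp only [Finset.coe_filter, Finset.mem_filter, Finset.mem_univ, true_and, Set.mem_setOf_eq] at hv ⊢
      exact hv)]
  apply Finset.sum_congr rfl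
  intro m hm
  simp only [Finset.mem_filter, Finset.mem_univ, true_and] at hm
  congr 1
  ext v
  simp only [Finset.mem_filter, Finset.mem_univ, true_and]
  constructor
  · intro h; exact ⟨by rw [h]; exact hm, h⟩
  · exact fun h => h.2

lemma natcard_filter (P : (Fin D → Fin K) → Prop) [DecidablePred P] :
    Nat.card {v : Fin D → Fin K // P v} = (Finset.univ.filter P).card := by
  rw [Nat.card_eq_fintype_card, Fintype.card_subtype]

end Counting

section Law

variable (hD1 : 1 ≤ D) (α : Equiv.Perm (Fin K)) {p : (Fin D → Fin K) → Fin D → ℝ}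

include hD1

lemma law_tail_ub (hp : IsDStrategy D K p) (j : ℕ) (hj : j ≤ K) :
    ∑ m ∈ Finset.univ.filter (fun m : Fin K => j ≤ (α.symm m : ℕ)), dLaw p m
      ≤ (1 / (K : ℝ) ^ D) * ((K ^ D - j ^ D : ℕ) : ℝ) := by
  classical
  have hswap : ∑ m ∈ Finset.univ.filter (fun m : Fin K => j ≤ (α.symm m : ℕ)), dLaw p m
      = (1 / (K : ℝ) ^ D) * ∑ v : Fin D → Fin K,
          ∑ m ∈ Finset.univ.filter (fun m : Fin K => j ≤ (α.symm m : ℕ)), mass p v m := by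
    simp only [dLaw_eq_mass]
    rw [← Finset.mul_sum, Finset.sum_comm]
  rw [hswap]
  apply mul_le_mul_of_nonneg_left ?_ (by positivity)
  calc ∑ v : Fin D → Fin K,
        ∑ m ∈ Finset.univ.filter (fun m : Fin K => j ≤ (α.symm m : ℕ)), mass p v m
      ≤ ∑ v : Fin D → Fin K, (if (∃ k, j ≤ (α.symm (v k) : ℕ)) then (1:ℝ) else 0) := by
        apply Finset.sum_le_sum
        intro v _
        by_cases h : ∃ k, j ≤ (α.symm (v k) : ℕ)
        · rw [if_pos h]
          calc ∑ m ∈ Finset.univ.filter (fun m : Fin K => j ≤ (α.symm m : ℕ)), mass p v m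
              ≤ ∑ m : Fin K, mass p v m := by
                apply Finset.sum_le_sum_of_subset_of_nonneg (Finset.filter_subset _ _)
                intro m _ _
                exact mass_nonneg hp v m
            _ = 1 := sum_mass hp v
        · rw [if_neg h]
          apply le_of_eq
          apply Finset.sum_eq_zero
          intro m hm
          simp only [Finset.mem_filter, Finset.mem_univ, true_and] at hm
          apply Finset.sum_eq_zero
          intro k _
          have hvk : v k ≠ m := by
            intro hc
            exact h ⟨k, by rw [hc]; exact hm⟩
          rw [if_neg hvk, mul_zero]
    _ = (((Finset.univ.filter fun v : Fin D → Fin K =>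
          ∃ k, j ≤ (α.symm (v k) : ℕ))).card : ℝ) := by rw [Finset.sum_boole]
    _ ≤ ((K ^ D - j ^ D : ℕ) : ℝ) := by
        have heq : (Finset.univ.filter fun v : Fin D → Fin K => ∃ k, j ≤ (α.symm (v k) : ℕ))
            = (Finset.univ.filter fun v : Fin D → Fin K =>
                j ≤ (α.symm (alphaMax hD1 α v) : ℕ)) := by
          ext v
          simp only [Finset.mem_filter, Finset.mem_univ, true_and]
          exact (tail_iff hD1 α j v).symm
        rw [heq, count_tail hD1 α j hj]

lemma law_tail_eq
    (hα : ∀ m : Fin K, dLaw p m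
      = (Nat.card {v : Fin D → Fin K // alphaMax hD1 α v = m} : ℝ) / (K : ℝ) ^ D)
    (j : ℕ) (hj : j ≤ K) :
    ∑ m ∈ Finset.univ.filter (fun m : Fin K => j ≤ (α.symm m : ℕ)), dLaw p m
      = (1 / (K : ℝ) ^ D) * ((K ^ D - j ^ D : ℕ) : ℝ) := by
  classical
  have hcard : ∀ m : Fin K, dLaw p m = (1 / (K : ℝ) ^ D)
      * (((Finset.univ.filter fun v : Fin D → Fin K => alphaMax hD1 α v = m)).card : ℝ) := by
    intro m
    rw [hα m, natcard_filter]
    ring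
  rw [Finset.sum_congr rfl (fun m _ => hcard m), ← Finset.mul_sum]
  congr 1
  rw [← Nat.cast_sum, sum_card_max hD1 α j hj]

end Law

section Transfer

variable {p : (Fin D → Fin K) → Fin D → ℝ} {a b c : Fin K} {lam : ℝ}

/-- total mass on value `a` among vectors containing `b`. -/
noncomputable def TT (p : (Fin D → Fin K) → Fin D → ℝ) (a b : Fin K) : ℝ :=
  ∑ v : Fin D → Fin K, (if ∃ k, v k = b then (1:ℝ) else 0) * mass p v a

lemma TT_nonneg (hp : IsDStrategy D K p) (a b : Fin K) : 0 ≤ TT p a b := by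
  apply Finset.sum_nonneg
  intro v _
  have := mass_nonneg hp v a
  split <;> simp_all

lemma TT_pos_of_mass (hp : IsDStrategy D K p) {v : Fin D → Fin K}
    (hb : ∃ k, v k = b) (ha : 0 < mass p v a) : 0 < TT p a b := by
  have hterm : (0:ℝ) < (if ∃ k, v k = b then (1:ℝ) else 0) * mass p v a := by
    rw [if_pos hb, one_mul]; exact ha
  calc (0:ℝ) < (if ∃ k, v k = b then (1:ℝ) else 0) * mass p v a := hterm
    _ ≤ TT p a b := by
      apply Finset.single_le_sum (f := fun v =>
        (if ∃ k, v k = b then (1:ℝ) else 0) * mass p v a) ?_ (Finset.mem_univ v)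
      intro w _
      have := mass_nonneg hp w a
      by_cases hw : ∃ k, w k = b <;> simp [hw, this]

/-- transfer a `lam` fraction of the mass on `a` to `b`, wherever possible. -/
noncomputable def tq (p : (Fin D → Fin K) → Fin D → ℝ) (a b : Fin K) (lam : ℝ) :
    (Fin D → Fin K) → Fin D → ℝ :=
  fun v k => if h : ∃ j, v j = b then
      p v k - lam * (p v k * (if v k = a then 1 else 0))
        + (if k = h.choose then lam * mass p v a else 0)
    else p v k

lemma tq_mass (hab : a ≠ b) (v : Fin D → Fin K) (cc : Fin K) :
    mass (tq p a b lam) v cc = mass p v cc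
      + (if ∃ k, v k = b then (1:ℝ) else 0) * (lam * mass p v a)
        * ((if cc = b then (1:ℝ) else 0) - (if cc = a then 1 else 0)) := by
  classical
  by_cases h : ∃ j, v j = b
  · have hvb : v h.choose = b := h.choose_spec
    rw [if_pos h]
    unfold mass tq
    simp only [dif_pos h]
    have expand : ∀ k : Fin D,
        (p v k - lam * (p v k * (if v k = a then 1 else 0))
          + (if k = h.choose then lam * mass p v a else 0)) * (if v k = cc then 1 else 0)
        = p v k * (if v k = cc then 1 else 0)
          - lam * (p v k * ((if v k = a then 1 else 0) * (if v k = cc then 1 else 0)))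
          + (if k = h.choose then lam * mass p v a * (if v k = cc then 1 else 0) else 0) := by
      intro k
      by_cases h3 : k = h.choose
      · subst h3
        by_cases h4 : v h.choose = cc <;> by_cases h5 : v h.choose = a <;>
          simp [h4, h5] <;> split_ifs <;> ring
      · by_cases h4 : v k = cc <;> by_cases h5 : v k = a <;>
          simp [h3, h4, h5] <;> split_ifs <;> ring
    rw [Finset.sum_congr rfl (fun k _ => expand k)]
    rw [Finset.sum_add_distrib, Finset.sum_sub_distrib]
    have pieceB : ∑ k : Fin D, lam * (p v k * ((if v k = a then 1 else 0) * (if v k = cc then 1 else 0)))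
        = lam * (if cc = a then mass p v a else 0) := by
      by_cases hca : cc = a
      · rw [hca, if_pos rfl]
        unfold mass
        rw [Finset.mul_sum]
        apply Finset.sum_congr rfl
        intro k _
        by_cases hk : v k = a <;> simp [hk]
      · rw [if_neg hca, mul_zero]
        apply Finset.sum_eq_zero
        intro k _
        by_cases hk : v k = a
        · have hne : v k ≠ cc := by rw [hk]; exact fun hh => hca hh.symm
          simp [hk, hne, show a ≠ cc from fun h' => hca h'.symm]
        · simp [hk]
    have pieceC : ∑ k : Fin D, (if k = h.choose then lam * mass p v a * (if v k = cc then 1 else 0) else 0)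
        = lam * mass p v a * (if cc = b then 1 else 0) := by
      rw [Finset.sum_ite_eq' Finset.univ h.choose
        (fun k => lam * mass p v a * (if v k = cc then 1 else 0))]
      simp only [Finset.mem_univ, if_pos, hvb]
      by_cases hcb : cc = b
      · simp [hcb]
      · simp [hcb, show b ≠ cc from fun hh => hcb hh.symm]
    rw [pieceB, pieceC]
    unfold mass
    by_cases hca : cc = a <;> by_cases hcb : cc = b <;>
      simp [hca, hcb] <;> split_ifs <;> ring
  · rw [if_neg h]
    unfold mass tq
    simp only [dif_neg h]
    ring

lemma entry_le_one {f : Fin D → ℝ} (h0 : ∀ k, 0 ≤ f k) (h1 : ∑ k, f k = 1) (k : Fin D) :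
    f k ≤ 1 := by
  rw [← h1]
  exact Finset.single_le_sum (fun j _ => h0 j) (Finset.mem_univ k)

lemma tq_strategy (hp : IsDStrategy D K p) (hab : a ≠ b) (h0 : 0 ≤ lam) (h1 : lam ≤ 1) :
    IsDStrategy D K (tq p a b lam) := by
  classical
  have hnn : ∀ v k, 0 ≤ tq p a b lam v k := by
    intro v k
    unfold tq
    by_cases h : ∃ j, v j = b
    · simp only [dif_pos h]
      have hk := hp.1 v k
      have hma := mass_nonneg hp v a
      have hterm : 0 ≤ (if k = h.choose then lam * mass p v a else 0) := by
        split
        · positivity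
        · exact le_rfl
      have hsub : lam * (p v k * (if v k = a then 1 else 0)) ≤ p v k := by
        by_cases hka : v k = a
        · rw [if_pos hka, mul_one]
          nlinarith
        · rw [if_neg hka, mul_zero, mul_zero]
          exact hk
      linarith
    · simp only [dif_neg h]; exact hp.1 v k
  have hsum : ∀ v, ∑ k, tq p a b lam v k = 1 := by
    intro v
    unfold tq
    by_cases h : ∃ j, v j = b
    · simp only [dif_pos h]
      rw [Finset.sum_add_distrib, Finset.sum_sub_distrib]
      rw [Finset.sum_ite_eq' Finset.univ h.choose (fun _ => lam * mass p v a)]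
      rw [← Finset.mul_sum]
      have : ∑ k, p v k * (if v k = a then 1 else 0) = mass p v a := rfl
      rw [this, hp.2.2 v]
      simp
    · simp only [dif_neg h]; exact hp.2.2 v
  exact ⟨hnn, fun v k => entry_le_one (hnn v) (hsum v) k, hsum⟩

lemma tq_dLaw (hab : a ≠ b) (m : Fin K) :
    dLaw (tq p a b lam) m = dLaw p m
      + (1 / (K:ℝ) ^ D) * (lam * TT p a b)
        * ((if m = b then (1:ℝ) else 0) - (if m = a then 1 else 0)) := by
  classical
  rw [dLaw_eq_mass, dLaw_eq_mass]
  rw [Finset.sum_congr rfl (fun v _ => tq_mass hab v m)]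
  rw [Finset.sum_add_distrib, mul_add]
  congr 1
  have hpt : ∀ v : Fin D → Fin K,
      (if ∃ k, v k = b then (1:ℝ) else 0) * (lam * mass p v a)
        * ((if m = b then (1:ℝ) else 0) - (if m = a then 1 else 0))
      = (lam * ((if m = b then (1:ℝ) else 0) - (if m = a then 1 else 0)))
        * ((if ∃ k, v k = b then (1:ℝ) else 0) * mass p v a) := by
    intro v; ring
  rw [Finset.sum_congr rfl (fun v _ => hpt v), ← Finset.mul_sum]
  unfold TT
  ring

lemma tq_mass_b_mono (hp : IsDStrategy D K p) (hab : a ≠ b) (h0 : 0 ≤ lam)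
    (v : Fin D → Fin K) : mass p v b ≤ mass (tq p a b lam) v b := by
  rw [tq_mass hab]
  have hma := mass_nonneg hp v a
  have hba : b ≠ a := hab.symm
  simp only [if_pos rfl, if_neg hba, sub_zero, mul_one, eq_self_iff_true, if_true]
  by_cases h : ∃ k, v k = b
  · rw [if_pos h, one_mul]; nlinarith [mul_nonneg h0 hma]
  · rw [if_neg h]; simp

lemma TT_mono {q : (Fin D → Fin K) → Fin D → ℝ}
    (h : ∀ v, mass p v b ≤ mass q v b) (c : Fin K) : TT p b c ≤ TT q b c := by
  apply Finset.sum_le_sum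
  intro v _
  by_cases hv : ∃ k, v k = c
  · simp only [if_pos hv, one_mul]; exact h v
  · simp [if_neg hv]

lemma Kpow_pos (x : Fin K) : (0:ℝ) < (K:ℝ) ^ D := by
  have : 0 < K := Nat.pos_of_ne_zero (fun h => by subst h; exact x.elim0)
  positivity

lemma step1 (hp : IsDStrategy D K p) (hab : a ≠ b) (hT : 0 < TT p a b) :
    ∃ ε : ℝ, 0 < ε ∧ (fun m => dLaw p m
      + ε * ((if m = b then (1:ℝ) else 0) - (if m = a then 1 else 0))) ∈ dS D K := by
  refine ⟨(1 / (K:ℝ) ^ D) * TT p a b, ?_, ?_⟩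
  · have := Kpow_pos (D := D) a
    positivity
  · refine ⟨tq p a b 1, tq_strategy hp hab zero_le_one le_rfl, ?_⟩
    funext m
    rw [tq_dLaw hab]
    ring

lemma step2 (hp : IsDStrategy D K p) (hab : a ≠ b) (hbc : b ≠ c) (hac : a ≠ c)
    (hT1 : 0 < TT p a b) (hT2 : 0 < TT p b c) :
    ∃ ε : ℝ, 0 < ε ∧ (fun m => dLaw p m
      + ε * ((if m = c then (1:ℝ) else 0) - (if m = a then 1 else 0))) ∈ dS D K := by
  classical
  set ε₀ := min (TT p a b) (TT p b c) with hε₀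
  have hε₀pos : 0 < ε₀ := lt_min hT1 hT2
  set lam₁ := ε₀ / TT p a b with hlam₁
  have hlam₁0 : 0 ≤ lam₁ := le_of_lt (div_pos hε₀pos hT1)
  have hlam₁1 : lam₁ ≤ 1 := by
    rw [hlam₁, div_le_one hT1]; exact min_le_left _ _
  set q₁ := tq p a b lam₁ with hq₁
  have hq₁s : IsDStrategy D K q₁ := tq_strategy hp hab hlam₁0 hlam₁1
  have hq₁law : ∀ m, dLaw q₁ m = dLaw p m + (1 / (K:ℝ) ^ D) * ε₀
      * ((if m = b then (1:ℝ) else 0) - (if m = a then 1 else 0)) := by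
    intro m
    rw [hq₁, tq_dLaw hab, hlam₁, div_mul_cancel₀ _ (ne_of_gt hT1)]
  have hTq₁ : 0 < TT q₁ b c ∧ ε₀ ≤ TT q₁ b c := by
    have hmono := TT_mono (p := p) (q := q₁)
      (fun v => tq_mass_b_mono hp hab hlam₁0 v) c
    constructor
    · exact lt_of_lt_of_le hT2 hmono
    · exact le_trans (min_le_right _ _) hmono
  set lam₂ := ε₀ / TT q₁ b c with hlam₂
  have hlam₂0 : 0 ≤ lam₂ := le_of_lt (div_pos hε₀pos hTq₁.1)
  have hlam₂1 : lam₂ ≤ 1 := by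
    rw [hlam₂, div_le_one hTq₁.1]; exact hTq₁.2
  set q₂ := tq q₁ b c lam₂ with hq₂
  have hq₂s : IsDStrategy D K q₂ := tq_strategy hq₁s hbc hlam₂0 hlam₂1
  have hq₂law : ∀ m, dLaw q₂ m = dLaw q₁ m + (1 / (K:ℝ) ^ D) * ε₀
      * ((if m = c then (1:ℝ) else 0) - (if m = b then 1 else 0)) := by
    intro m
    rw [hq₂, tq_dLaw hbc, hlam₂, div_mul_cancel₀ _ (ne_of_gt hTq₁.1)]
  refine ⟨(1 / (K:ℝ) ^ D) * ε₀, ?_, ?_⟩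
  · have := Kpow_pos (D := D) a
    positivity
  · refine ⟨q₂, hq₂s, ?_⟩
    funext m
    rw [hq₂law m, hq₁law m]
    ring

lemma notboth (he : dExtreme D K (dLaw p)) (hac : a ≠ c) {ε₁ ε₂ : ℝ}
    (h1pos : 0 < ε₁) (h2pos : 0 < ε₂)
    (h₁ : (fun m => dLaw p m
      + ε₁ * ((if m = c then (1:ℝ) else 0) - (if m = a then 1 else 0))) ∈ dS D K)
    (h₂ : (fun m => dLaw p m
      + ε₂ * ((if m = a then (1:ℝ) else 0) - (if m = c then 1 else 0))) ∈ dS D K) :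
    False := by
  have hsum : 0 < ε₁ + ε₂ := by linarith
  set t := ε₂ / (ε₁ + ε₂) with ht
  have ht0 : 0 < t := div_pos h2pos hsum
  have ht1 : t < 1 := by rw [ht, div_lt_one hsum]; linarith
  have hkey := he.2 _ h₁ _ h₂ t ht0 ht1 ?_
  · have hc := congrFun hkey c
    have hca : c ≠ a := hac.symm
    simp only [if_pos rfl, if_neg hca, eq_self_iff_true, if_true] at hc
    have : ε₁ * (1 - 0) = ε₂ * (0 - 1) := by linarith
    nlinarith
  · funext m
    have : t * (ε₁ * ((if m = c then (1:ℝ) else 0) - (if m = a then 1 else 0)))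
        + (1 - t) * (ε₂ * ((if m = a then (1:ℝ) else 0) - (if m = c then 1 else 0))) = 0 := by
      rw [ht]
      field_simp
      ring
    linarith [this]
    
end Transfer

section Main

variable {p : (Fin D → Fin K) → Fin D → ℝ}

lemma extreme_forward (hD : 2 ≤ D) (hK : 1 ≤ K) (hD1 : 1 ≤ D)
    (hp : IsDStrategy D K p) (he : dExtreme D K (dLaw p)) :
    ∃ α : Equiv.Perm (Fin K), ∀ m : Fin K,
      dLaw p m = (Nat.card {v : Fin D → Fin K // alphaMax hD1 α v = m} : ℝ) / (K : ℝ) ^ D := by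
  classical
  set R : Fin K → Fin K → Prop := fun x y => x ≠ y ∧
    ∃ q, IsDStrategy D K q ∧ dLaw q = dLaw p ∧ 0 < TT q x y with hR
  have R_total : ∀ x y, x ≠ y → R x y ∨ R y x := by
    intro x y hxy
    set v₀ : Fin D → Fin K := fun k => if (k : ℕ) = 0 then x else y with hv₀
    have hx : v₀ ⟨0, by omega⟩ = x := by simp [hv₀]
    have hy : v₀ ⟨1, by omega⟩ = y := by simp [hv₀]
    have hmass : mass p v₀ x + mass p v₀ y = 1 := by
      unfold mass
      rw [← Finset.sum_add_distrib]
      have hpt : ∀ k : Fin D, (p v₀ k * (if v₀ k = x then (1:ℝ) else 0)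
          + p v₀ k * (if v₀ k = y then 1 else 0)) = p v₀ k := by
        intro k
        by_cases hk : (k : ℕ) = 0
        · have h1 : v₀ k = x := by simp [hv₀, hk]
          have h2 : v₀ k ≠ y := by rw [h1]; exact hxy
          simp [h1, h2, hxy]
        · have h1 : v₀ k = y := by simp [hv₀, hk]
          have h2 : v₀ k ≠ x := by rw [h1]; exact hxy.symm
          simp [h1, h2, hxy.symm]
      rw [Finset.sum_congr rfl (fun k _ => hpt k)]
      exact hp.2.2 v₀
    have hb1 : (if ∃ k, v₀ k = y then (1:ℝ) else 0) * mass p v₀ x ≤ TT p x y := by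
      apply Finset.single_le_sum (f := fun w =>
        (if ∃ k, w k = y then (1:ℝ) else 0) * mass p w x) ?_ (Finset.mem_univ v₀)
      intro w _
      have := mass_nonneg hp w x
      by_cases hw : ∃ k, w k = y <;> simp [hw, this]
    have hb2 : (if ∃ k, v₀ k = x then (1:ℝ) else 0) * mass p v₀ y ≤ TT p y x := by
      apply Finset.single_le_sum (f := fun w =>
        (if ∃ k, w k = x then (1:ℝ) else 0) * mass p w y) ?_ (Finset.mem_univ v₀)
      intro w _
      have := mass_nonneg hp w y
      by_cases hw : ∃ k, w k = x <;> simp [hw, this]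
    rw [if_pos ⟨⟨1, by omega⟩, hy⟩, one_mul] at hb1
    rw [if_pos ⟨⟨0, by omega⟩, hx⟩, one_mul] at hb2
    by_cases hpos : 0 < TT p x y
    · exact Or.inl ⟨hxy, p, hp, rfl, hpos⟩
    · refine Or.inr ⟨hxy.symm, p, hp, rfl, ?_⟩
      push_neg at hpos
      linarith
  have R_asymm : ∀ x y, R x y → R y x → False := by
    rintro x y ⟨hxy, q₁, hq₁, hlaw₁, hT₁⟩ ⟨-, q₂, hq₂, hlaw₂, hT₂⟩
    obtain ⟨ε₁, hε₁, h₁⟩ := step1 hq₁ hxy hT₁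
    obtain ⟨ε₂, hε₂, h₂⟩ := step1 hq₂ hxy.symm hT₂
    rw [hlaw₁] at h₁
    rw [hlaw₂] at h₂
    exact notboth he hxy hε₁ hε₂ h₁ h₂
  have R_trans : ∀ x y z, R x y → R y z → R x z := by
    intro x y z hxy hyz
    have hxz : x ≠ z := by
      rintro rfl
      exact R_asymm x y hxy hyz
    by_contra hnRxz
    have hRzx := (R_total x z hxz).resolve_left hnRxz
    obtain ⟨hxy', q₁, hq₁, hlaw₁, hT₁⟩ := hxy
    obtain ⟨hyz', q₂, hq₂, hlaw₂, hT₂⟩ := hyz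
    set q : (Fin D → Fin K) → Fin D → ℝ := fun v k => (q₁ v k + q₂ v k) / 2 with hq
    have hmassq : ∀ v aa, mass q v aa = (mass q₁ v aa + mass q₂ v aa) / 2 := by
      intro v aa
      unfold mass
      rw [← Finset.sum_add_distrib, Finset.sum_div]
      apply Finset.sum_congr rfl
      intro k _
      simp only [hq]
      split <;> ring
    have hqs : IsDStrategy D K q := by
      have hnn : ∀ v k, 0 ≤ q v k := by
        intro v k
        have := hq₁.1 v k
        have := hq₂.1 v k
        simp only [hq]
        linarith
      have hsum : ∀ v, ∑ k, q v k = 1 := by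
        intro v
        simp only [hq]
        rw [← Finset.sum_div, Finset.sum_add_distrib, hq₁.2.2 v, hq₂.2.2 v]
        norm_num
      exact ⟨hnn, fun v k => entry_le_one (hnn v) (hsum v) k, hsum⟩
    have hqlaw : dLaw q = dLaw p := by
      funext m
      rw [dLaw_eq_mass, Finset.sum_congr rfl (fun v _ => hmassq v m),
        ← Finset.sum_div, Finset.sum_add_distrib]
      have e1 : dLaw q₁ m = (1 / (K:ℝ)^D) * ∑ v, mass q₁ v m := dLaw_eq_mass q₁ m
      have e2 : dLaw q₂ m = (1 / (K:ℝ)^D) * ∑ v, mass q₂ v m := dLaw_eq_mass q₂ m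
      have e3 : dLaw p m = (dLaw q₁ m + dLaw q₂ m) / 2 := by
        rw [hlaw₁, hlaw₂]; ring
      rw [e3, e1, e2]
      ring
    have hTTq : ∀ aa bb, TT q aa bb = (TT q₁ aa bb + TT q₂ aa bb) / 2 := by
      intro aa bb
      unfold TT
      rw [← Finset.sum_add_distrib, Finset.sum_div]
      apply Finset.sum_congr rfl
      intro v _
      rw [hmassq v aa]
      ring
    have hTq1 : 0 < TT q x y := by
      rw [hTTq]
      have := TT_nonneg hq₂ x y
      linarith
    have hTq2 : 0 < TT q y z := by
      rw [hTTq]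
      have := TT_nonneg hq₁ y z
      linarith
    obtain ⟨ε, hε, h₁⟩ := step2 hqs hxy' hyz' hxz hTq1 hTq2
    rw [hqlaw] at h₁
    obtain ⟨hzx', q₃, hq₃, hlaw₃, hT₃⟩ := hRzx
    obtain ⟨ε₂, hε₂, h₂⟩ := step1 hq₃ hzx' hT₃
    rw [hlaw₃] at h₂
    exact notboth he hxz hε hε₂ h₁ h₂
  -- rank function
  have hcard : ∀ x : Fin K, (Finset.univ.filter fun y => R x y).card < K := by
    intro x
    have hsub : (Finset.univ.filter fun y => R x y) ⊆ Finset.univ.erase x := by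
      intro y hy
      simp only [Finset.mem_filter, Finset.mem_univ, true_and] at hy
      exact Finset.mem_erase.mpr ⟨hy.1.symm, Finset.mem_univ y⟩
    calc (Finset.univ.filter fun y => R x y).card
        ≤ (Finset.univ.erase x).card := Finset.card_le_card hsub
      _ = K - 1 := by rw [Finset.card_erase_of_mem (Finset.mem_univ x)]; simp
      _ < K := by omega
  set β : Fin K → Fin K := fun x => ⟨(Finset.univ.filter fun y => R x y).card, hcard x⟩ with hβ
  have hmono : ∀ x y, R x y → (β y : ℕ) < (β x : ℕ) := by
    intro x y hxy
    have hsub : (Finset.univ.filter fun z => R y z) ⊆ (Finset.univ.filter fun z => R x z) := by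
      intro z hz
      simp only [Finset.mem_filter, Finset.mem_univ, true_and] at hz ⊢
      exact R_trans x y z hxy hz
    have hss : (Finset.univ.filter fun z => R y z) ⊂ (Finset.univ.filter fun z => R x z) := by
      rw [Finset.ssubset_iff_of_subset hsub]
      refine ⟨y, ?_, ?_⟩
      · simp only [Finset.mem_filter, Finset.mem_univ, true_and]; exact hxy
      · simp only [Finset.mem_filter, Finset.mem_univ, true_and]
        exact fun hcon => hcon.1 rfl
    exact Finset.card_lt_card hss
  have hinj : Function.Injective β := by
    intro x y hxy
    by_contra hne
    rcases R_total x y hne with h | h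
    · have := hmono x y h; rw [hxy] at this; omega
    · have := hmono y x h; rw [hxy] at this; omega
  have hbij : Function.Bijective β := (Finite.injective_iff_bijective).mp hinj
  set α : Equiv.Perm (Fin K) := (Equiv.ofBijective β hbij).symm with hα
  have hαsymm : ∀ x, α.symm x = β x := fun x => rfl
  have hR_iff : ∀ x y, x ≠ y → (R x y ↔ (β y : ℕ) < (β x : ℕ)) := by
    intro x y hxy
    constructor
    · exact hmono x y
    · intro hlt
      rcases R_total x y hxy with h | h
      · exact h
      · have := hmono y x h; omega
  refine ⟨α, fun m => ?_⟩
  have hconc : ∀ v : Fin D → Fin K, ∀ aa, 0 < mass p v aa → aa = alphaMax hD1 α v := by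
    intro v aa hpos
    by_contra hne
    have him : ∃ k, v k = aa := by
      by_contra hnex
      push_neg at hnex
      have : mass p v aa = 0 :=
        Finset.sum_eq_zero (fun k _ => by rw [if_neg (hnex k), mul_zero])
      linarith
    have hMvim : ∃ k, v k = alphaMax hD1 α v := alphaMax_mem hD1 α v
    have hT : 0 < TT p aa (alphaMax hD1 α v) := TT_pos_of_mass hp hMvim hpos
    have hRaM : R aa (alphaMax hD1 α v) := ⟨hne, p, hp, rfl, hT⟩
    obtain ⟨k₀, hk₀⟩ := him
    have h1 : α.symm (v k₀) ≤ α.symm (alphaMax hD1 α v) := le_symm_alphaMax hD1 α v k₀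
    rw [hk₀] at h1
    have hlt : (β (alphaMax hD1 α v) : ℕ) < (β aa : ℕ) := (hR_iff _ _ hne).mp hRaM
    rw [hαsymm, hαsymm] at h1
    have : (β aa : ℕ) ≤ (β (alphaMax hD1 α v) : ℕ) := h1
    omega
  have hconc' : ∀ v : Fin D → Fin K,
      mass p v m = if alphaMax hD1 α v = m then 1 else 0 := by
    intro v
    by_cases hm : alphaMax hD1 α v = m
    · rw [if_pos hm]
      have hz : ∀ aa ∈ Finset.univ, aa ≠ m → mass p v aa = 0 := by
        intro aa _ hne
        by_contra hnz
        have hpos : 0 < mass p v aa :=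
          lt_of_le_of_ne (mass_nonneg hp v aa) (Ne.symm hnz)
        exact hne ((hconc v aa hpos).trans hm)
      calc mass p v m = ∑ aa, mass p v aa :=
            (Finset.sum_eq_single m hz (by simp)).symm
        _ = 1 := sum_mass hp v
    · rw [if_neg hm]
      by_contra hnz
      have hpos : 0 < mass p v m :=
        lt_of_le_of_ne (mass_nonneg hp v m) (Ne.symm hnz)
      exact hm ((hconc v m hpos).symm)
  rw [dLaw_eq_mass, Finset.sum_congr rfl (fun v _ => hconc' v), Finset.sum_boole,
    natcard_filter]
  ring


lemma extreme_backward (hD1 : 1 ≤ D) (hp : IsDStrategy D K p) (α : Equiv.Perm (Fin K))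
    (hα : ∀ m : Fin K, dLaw p m
      = (Nat.card {v : Fin D → Fin K // alphaMax hD1 α v = m} : ℝ) / (K : ℝ) ^ D) :
    dExtreme D K (dLaw p) := by
  classical
  constructor
  · exact ⟨p, hp, rfl⟩
  · rintro f₁ ⟨q₁, hq₁, rfl⟩ f₂ ⟨q₂, hq₂, rfl⟩ t ht0 ht1 heq
    have ht1' : 0 < 1 - t := by linarith
    have htail : ∀ j : ℕ, j ≤ K →
        (∑ m ∈ Finset.univ.filter (fun m : Fin K => j ≤ (α.symm m : ℕ)), dLaw q₁ m
            = (1 / (K:ℝ)^D) * ((K^D - j^D : ℕ) : ℝ))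
        ∧ (∑ m ∈ Finset.univ.filter (fun m : Fin K => j ≤ (α.symm m : ℕ)), dLaw q₂ m
            = (1 / (K:ℝ)^D) * ((K^D - j^D : ℕ) : ℝ)) := by
      intro j hj
      have h1 := law_tail_ub hD1 α hq₁ j hj
      have h2 := law_tail_ub hD1 α hq₂ j hj
      have h0 := law_tail_eq hD1 α hα j hj
      have hsplit : ∑ m ∈ Finset.univ.filter (fun m : Fin K => j ≤ (α.symm m : ℕ)), dLaw p m
          = t * ∑ m ∈ Finset.univ.filter (fun m : Fin K => j ≤ (α.symm m : ℕ)), dLaw q₁ m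
            + (1 - t) * ∑ m ∈ Finset.univ.filter (fun m : Fin K => j ≤ (α.symm m : ℕ)), dLaw q₂ m := by
        rw [Finset.mul_sum, Finset.mul_sum, ← Finset.sum_add_distrib]
        apply Finset.sum_congr rfl
        intro m _
        exact congrFun heq m
      rw [h0] at hsplit
      constructor <;> nlinarith
    funext m
    set i := α.symm m with hi
    have hm : m = α i := by rw [hi]; simp
    have hsplitT : ∀ g : Fin K → ℝ,
        ∑ m' ∈ Finset.univ.filter (fun m' : Fin K => (i : ℕ) ≤ (α.symm m' : ℕ)), g m'
          = g (α i)
            + ∑ m' ∈ Finset.univ.filter (fun m' : Fin K => (i : ℕ) + 1 ≤ (α.symm m' : ℕ)), g m' := by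
      intro g
      have hins : Finset.univ.filter (fun m' : Fin K => (i : ℕ) ≤ (α.symm m' : ℕ))
          = insert (α i) (Finset.univ.filter (fun m' : Fin K => (i : ℕ) + 1 ≤ (α.symm m' : ℕ))) := by
        ext m'
        simp only [Finset.mem_filter, Finset.mem_univ, true_and, Finset.mem_insert]
        constructor
        · intro h
          rcases Nat.eq_or_lt_of_le h with h' | h'
          · left
            rw [← Equiv.symm_apply_eq]
            exact Fin.ext h'.symm
          · right; omega
        · rintro (h | h)
          · rw [h]; simp
          · omega
      rw [hins, Finset.sum_insert ?_]
      simp only [Finset.mem_filter, Finset.mem_univ, true_and, Equiv.symm_apply_apply]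
      omega
    have e1 := htail (i : ℕ) (le_of_lt i.2)
    have e2 := htail ((i : ℕ) + 1) i.2
    have g1 := hsplitT (dLaw q₁)
    have g2 := hsplitT (dLaw q₂)
    rw [e1.1, e2.1] at g1
    rw [e1.2, e2.2] at g2
    rw [hm]
    linarith

lemma formula (hD1 : 1 ≤ D) (α : Equiv.Perm (Fin K))
    (hα : ∀ m : Fin K, dLaw p m
      = (Nat.card {v : Fin D → Fin K // alphaMax hD1 α v = m} : ℝ) / (K : ℝ) ^ D)
    (i : Fin K) :
    dLaw p (α i) = (((i : ℕ) + 1 : ℝ) ^ D - ((i : ℕ) : ℝ) ^ D) / (K : ℝ) ^ D := by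
  classical
  rw [hα (α i), natcard_filter, count_max hD1 α i]
  have h1 : ((i : ℕ)) ^ D ≤ ((i : ℕ) + 1) ^ D := Nat.pow_le_pow_left (by omega) D
  rw [Nat.cast_sub h1]
  push_cast
  ring

end Main
end St18

/-- in the discrete model, `σ_p` is extreme iff it is the law of the
`≺_α`-maximum of `D` i.i.d. uniform samples for some permutation `α` of `Fin K`, in which
case `σ_p(α(i)) = ((i+1)^D − i^D)/K^D`. -/
theorem stmt18 (D K : ℕ) (hD : 2 ≤ D) (hK : 1 ≤ K)
    (p : (Fin D → Fin K) → Fin D → ℝ) (hp : IsDStrategy D K p) :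
    (dExtreme D K (dLaw p) ↔
      ∃ α : Equiv.Perm (Fin K), ∀ m : Fin K,
        dLaw p m =
          (Nat.card {v : Fin D → Fin K // alphaMax (by omega) α v = m} : ℝ) / (K : ℝ) ^ D) ∧
    ∀ α : Equiv.Perm (Fin K),
      (∀ m : Fin K, dLaw p m =
        (Nat.card {v : Fin D → Fin K // alphaMax (by omega) α v = m} : ℝ) / (K : ℝ) ^ D) →
      ∀ i : Fin K,
        dLaw p (α i) = (((i : ℕ) + 1 : ℝ) ^ D - ((i : ℕ) : ℝ) ^ D) / (K : ℝ) ^ D := by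
  have hD1 : 1 ≤ D := by omega
  refine ⟨⟨fun he => ?_, fun h => ?_⟩, fun α hα i => ?_⟩
  · obtain ⟨α, hα⟩ := St18.extreme_forward hD hK hD1 hp he
    exact ⟨α, hα⟩
  · obtain ⟨α, hα⟩ := h
    exact St18.extreme_backward hD1 hp α hα
  · exact St18.formula hD1 α hα i
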